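/- Let H₀ ∈ (0, ∞) be the unique zero of the derivative of A(H) = 8π·(1/(4H²+1) + (4H²/(4H²+1)^{3/2})·artanh(1/√(4H²+1))) on (0, ∞). Then the derivative A′(H) is strictly positive for all H with 0 < H < H₀, and strictly negative for all H with H > H₀. -/

import Mathlib

open Real Set

/-- The inverse hyperbolic tangent. -/
noncomputable def artanh (x : ℝ) : ℝ := (1 / 2) * Real.log ((1 + x) / (1 - x))

/-- Pedrosa's formula for the area of the rotational CMC sphere of mean
curvature `H` in `S² × ℝ`. -/
noncomputable def pedrosaArea (H : ℝ) : ℝ :=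
  8 * Real.pi * (1 / (4 * H ^ 2 + 1) +
    (4 * H ^ 2 / (4 * H ^ 2 + 1) ^ ((3 : ℝ) / 2)) *
      _root_.artanh (1 / Real.sqrt (4 * H ^ 2 + 1)))

/-!
With `s = 1 / √(4H² + 1) ∈ (0, 1)` one has `A(H) = 8π (s² + s (1 - s²) artanh s)`, hence
`A'(H) = -32π H s³ φ(s)` with `φ(s) = 3s + (1 - 3s²) artanh s`. For large `H` (`3s² ≤ 1`) both
terms of `φ` are nonnegative, so `A' < 0`; as `H → 0`, `s → 1` and `artanh s → ∞`, so `φ < 0`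
and `A' > 0`. Since `A'` is continuous on `(0, ∞)` and vanishes there only at `H₀`, the
intermediate value theorem propagates these signs to all of `(0, H₀)` and `(H₀, ∞)`.
-/

theorem Real.hasDerivAt_artanh {x : ℝ} (hx : x ∈ Ioo (-1) 1) :
    HasDerivAt Real.artanh (1 - x ^ 2)⁻¹ x := by
  obtain ⟨h₁, h₂⟩ := hx
  have hsub : 1 - x ≠ 0 := by linarith
  have hadd : 1 + x ≠ 0 := by linarith
  have hq : HasDerivAt (fun y => (1 + y) / (1 - y)) (2 / (1 - x) ^ 2) x := by
    refine (((hasDerivAt_id' x).const_add 1).div ((hasDerivAt_id' x).const_sub 1)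
      hsub).congr_deriv ?_
    ring
  have hlog := (hq.log (div_ne_zero hadd hsub)).const_mul (1 / 2)
  refine (hlog.congr_deriv ?_).congr_of_eventuallyEq ?_
  · have : 1 - x ^ 2 ≠ 0 := by nlinarith
    field_simp
    ring
  · filter_upwards [Ioo_mem_nhds h₁ h₂] with y hy
    exact Real.artanh_eq_half_log (Ioo_subset_Icc_self hy)

theorem IsPreconnected.lt_apply_iff_of_forall_ne {X α : Type*} [TopologicalSpace X] [LinearOrder α]
    [TopologicalSpace α] [OrderClosedTopology α] {s : Set X} (hs : IsPreconnected s)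
    {f : X → α} (hf : ContinuousOn f s) {c : α} (hc : ∀ x ∈ s, f x ≠ c) {a b : X}
    (ha : a ∈ s) (hb : b ∈ s) : c < f a ↔ c < f b := by
  suffices key : ∀ a ∈ s, ∀ b ∈ s, c < f a → c < f b from ⟨key a ha b hb, key b hb a ha⟩
  intro a ha b hb hca
  by_contra! hcb
  obtain ⟨x, hx, hfx⟩ := hs.intermediate_value hb ha hf ⟨hcb, hca.le⟩
  exact hc x hx hfx

theorem IsPreconnected.apply_lt_iff_of_forall_ne {X α : Type*} [TopologicalSpace X]
    [LinearOrder α] [TopologicalSpace α] [OrderClosedTopology α] {s : Set X}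
    (hs : IsPreconnected s) {f : X → α} (hf : ContinuousOn f s) {c : α}
    (hc : ∀ x ∈ s, f x ≠ c) {a b : X} (ha : a ∈ s) (hb : b ∈ s) : f a < c ↔ f b < c :=
  hs.lt_apply_iff_of_forall_ne (α := αᵒᵈ) hf hc ha hb

noncomputable def pedrosaProfile (s : ℝ) : ℝ := s ^ 2 + s * (1 - s ^ 2) * Real.artanh s

noncomputable def pedrosaProfileDeriv (s : ℝ) : ℝ := 3 * s + (1 - 3 * s ^ 2) * Real.artanh s

theorem hasDerivAt_pedrosaProfile {s : ℝ} (hs : s ∈ Ioo (-1) 1) :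
    HasDerivAt pedrosaProfile (pedrosaProfileDeriv s) s := by
  have hpoly : HasDerivAt (fun t : ℝ => t * (1 - t ^ 2)) (1 - 3 * s ^ 2) s := by
    refine ((hasDerivAt_id' s).mul ((hasDerivAt_pow 2 s).const_sub 1)).congr_deriv ?_
    ring
  have h := (hasDerivAt_pow 2 s).add (hpoly.mul (Real.hasDerivAt_artanh hs))
  refine h.congr_deriv ?_
  have : 1 - s ^ 2 ≠ 0 := by nlinarith [hs.1, hs.2]
  simp only [pedrosaProfileDeriv]
  field_simp
  ring

theorem continuousOn_pedrosaProfileDeriv : ContinuousOn pedrosaProfileDeriv (Ioo (-1) 1) := by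
  have : ContinuousOn Real.artanh (Ioo (-1) 1) := fun s hs =>
    (Real.hasDerivAt_artanh hs).continuousAt.continuousWithinAt
  unfold pedrosaProfileDeriv
  fun_prop

theorem pedrosaProfileDeriv_pos {s : ℝ} (hs₀ : 0 < s) (hs : 3 * s ^ 2 ≤ 1) :
    0 < pedrosaProfileDeriv s :=
  add_pos_of_pos_of_nonneg (by positivity)
    (mul_nonneg (by linarith) (Real.artanh_nonneg hs₀.le))

theorem pedrosaProfileDeriv_neg {s : ℝ} (hs₀ : 63 / 65 ≤ s) (hs₁ : s < 1) :
    pedrosaProfileDeriv s < 0 := by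
  have hartanh : 3 * Real.log 2 ≤ Real.artanh s := by
    have h64 : Real.artanh (63 / 65) = 3 * Real.log 2 := by
      rw [Real.artanh_eq_half_log (by norm_num), show (1 + 63 / 65) / (1 - 63 / 65) = (2 : ℝ) ^ 6
        by norm_num, Real.log_pow]
      ring
    exact h64 ▸ Real.artanh_le_artanh (by norm_num) hs₁ hs₀
  have hcoef : 1 - 3 * s ^ 2 ≤ -(9 / 5) := by nlinarith
  have := Real.log_two_gt_d9
  unfold pedrosaProfileDeriv
  nlinarith [mul_le_mul_of_nonpos_left hartanh (by linarith : 1 - 3 * s ^ 2 ≤ 0)]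

noncomputable def pedrosaParam (H : ℝ) : ℝ := 1 / √(4 * H ^ 2 + 1)

theorem pedrosaParam_pos (H : ℝ) : 0 < pedrosaParam H := by
  unfold pedrosaParam
  positivity

theorem pedrosaParam_sq (H : ℝ) : pedrosaParam H ^ 2 = (4 * H ^ 2 + 1)⁻¹ := by
  rw [pedrosaParam, div_pow, Real.sq_sqrt (by positivity), one_pow, one_div]

theorem pedrosaParam_lt_one {H : ℝ} (hH : H ≠ 0) : pedrosaParam H < 1 := by
  rw [pedrosaParam, div_lt_one (by positivity), Real.lt_sqrt zero_le_one]
  have : 0 < H ^ 2 := by positivity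
  linarith

theorem continuous_pedrosaParam : Continuous pedrosaParam :=
  continuous_const.div (by fun_prop) fun H => by positivity

theorem hasDerivAt_pedrosaParam (H : ℝ) :
    HasDerivAt pedrosaParam (-(4 * H * pedrosaParam H ^ 3)) H := by
  have ht : HasDerivAt (fun H => 4 * H ^ 2 + 1) (8 * H) H :=
    (((hasDerivAt_pow 2 H).const_mul 4).add_const 1).congr_deriv (by ring)
  have hpos : 0 < √(4 * H ^ 2 + 1) := by positivity
  have h := (ht.sqrt (by positivity)).inv hpos.ne'
  simp only [← one_div] at h
  refine h.congr_deriv ?_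
  have hr2 := Real.sq_sqrt (by positivity : (0 : ℝ) ≤ 4 * H ^ 2 + 1)
  rw [pedrosaParam, hr2, div_pow, one_pow, pow_succ √(4 * H ^ 2 + 1) 2, hr2]
  field_simp
  ring

theorem pedrosaArea_eq : pedrosaArea = fun H => 8 * π * pedrosaProfile (pedrosaParam H) := by
  funext H
  have ht : 0 < 4 * H ^ 2 + 1 := by positivity
  set r := √(4 * H ^ 2 + 1) with hr
  have hr0 : 0 < r := Real.sqrt_pos.2 ht
  have hr2 : r ^ 2 = 4 * H ^ 2 + 1 := Real.sq_sqrt ht.le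
  have hrpow : (4 * H ^ 2 + 1) ^ ((3 : ℝ) / 2) = r ^ 3 := by
    rw [hr, Real.sqrt_eq_rpow, ← Real.rpow_natCast (_ ^ ((1 : ℝ) / 2)) 3, ← Real.rpow_mul ht.le]
    norm_num
  have hartanh : _root_.artanh (1 / r) = Real.artanh (1 / r) :=
    (Real.artanh_eq_half_log ⟨by linarith [one_div_pos.2 hr0], (div_le_one hr0).2
      (by nlinarith [sq_nonneg H])⟩).symm
  rw [pedrosaArea, pedrosaProfile, pedrosaParam, ← hr, hrpow, hartanh,
    show 4 * H ^ 2 = r ^ 2 - 1 by linarith]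
  field_simp
  ring

theorem hasDerivAt_pedrosaArea {H : ℝ} (hH : H ≠ 0) :
    HasDerivAt pedrosaArea
      (-(32 * π * H * pedrosaParam H ^ 3 * pedrosaProfileDeriv (pedrosaParam H))) H := by
  have hp : pedrosaParam H ∈ Ioo (-1) 1 :=
    ⟨by linarith [pedrosaParam_pos H], pedrosaParam_lt_one hH⟩
  rw [pedrosaArea_eq]
  exact (((hasDerivAt_pedrosaProfile hp).comp H (hasDerivAt_pedrosaParam H)).const_mul
    (8 * π)).congr_deriv (by ring)

theorem continuousOn_deriv_pedrosaArea : ContinuousOn (deriv pedrosaArea) {0}ᶜ := by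
  have hφ : ContinuousOn (fun H => pedrosaProfileDeriv (pedrosaParam H)) {0}ᶜ :=
    continuousOn_pedrosaProfileDeriv.comp continuous_pedrosaParam.continuousOn fun H hH =>
      ⟨by linarith [pedrosaParam_pos H], pedrosaParam_lt_one hH⟩
  have hp := continuous_pedrosaParam
  exact ContinuousOn.congr (by fun_prop) fun H hH => (hasDerivAt_pedrosaArea hH).deriv

theorem deriv_pedrosaArea_pos {H : ℝ} (h₀ : 0 < H) (h : H ≤ 1 / 8) :
    0 < deriv pedrosaArea H := by
  have hp := pedrosaParam_pos H
  have hp₀ : 63 / 65 ≤ pedrosaParam H := by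
    refine le_of_pow_le_pow_left₀ two_ne_zero hp.le ?_
    rw [pedrosaParam_sq, le_inv_comm₀ (by positivity) (by positivity)]
    nlinarith
  have hφ := pedrosaProfileDeriv_neg hp₀ (pedrosaParam_lt_one h₀.ne')
  rw [(hasDerivAt_pedrosaArea h₀.ne').deriv, neg_pos]
  exact mul_neg_of_pos_of_neg (by positivity) hφ

theorem deriv_pedrosaArea_neg {H : ℝ} (h₀ : 0 < H) (h : 1 ≤ 2 * H ^ 2) :
    deriv pedrosaArea H < 0 := by
  have hp₀ : 3 * pedrosaParam H ^ 2 ≤ 1 := by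
    rw [pedrosaParam_sq, ← div_eq_mul_inv, div_le_one (by positivity)]
    linarith
  have hp := pedrosaParam_pos H
  have hφ := pedrosaProfileDeriv_pos hp hp₀
  rw [(hasDerivAt_pedrosaArea h₀.ne').deriv, neg_lt_zero]
  exact mul_pos (by positivity) hφ

theorem pedrosaArea_deriv_sign_general (H₀ : ℝ) (hH₀ : H₀ ∈ Set.Ioi (0 : ℝ))
    (huniq : ∀ H ∈ Set.Ioi (0 : ℝ), deriv pedrosaArea H = 0 → H = H₀) :
    (∀ H : ℝ, 0 < H → H < H₀ → 0 < deriv pedrosaArea H) ∧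
      (∀ H : ℝ, H₀ < H → deriv pedrosaArea H < 0) := by
  have hcont : ContinuousOn (deriv pedrosaArea) (Ioi 0) :=
    continuousOn_deriv_pedrosaArea.mono fun H hH => ne_of_gt hH
  have hne : ∀ H ∈ Ioi 0, H ≠ H₀ → deriv pedrosaArea H ≠ 0 :=
    fun H hH hHH₀ h => hHH₀ (huniq H hH h)
  constructor
  · intro H hH hHH₀
    have ha : min H (1 / 8) ∈ Ioo 0 H₀ := ⟨lt_min hH (by norm_num), (min_le_left _ _).trans_lt hHH₀⟩
    refine (isPreconnected_Ioo.lt_apply_iff_of_forall_ne (hcont.mono Ioo_subset_Ioi_self)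
      (fun x hx => hne x hx.1 hx.2.ne) ha ⟨hH, hHH₀⟩).1 ?_
    exact deriv_pedrosaArea_pos ha.1 (min_le_right _ _)
  · intro H hH
    have hb : max H 1 ∈ Ioi H₀ := lt_max_of_lt_left hH
    refine (isPreconnected_Ioi.apply_lt_iff_of_forall_ne (hcont.mono (Ioi_subset_Ioi hH₀.out.le))
      (fun x hx => hne x (hH₀.out.trans hx) hx.ne') hb hH).1 ?_
    exact deriv_pedrosaArea_neg (hH₀.out.trans hb) (by nlinarith [le_max_right H 1])

/-- If `H₀` is the unique zero of `A'` in `(0, ∞)`, then `A' > 0` on `(0, H₀)`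
and `A' < 0` on `(H₀, ∞)`. -/
theorem pedrosaArea_deriv_sign (H₀ : ℝ) (hH₀ : H₀ ∈ Set.Ioi (0 : ℝ))
    (hzero : deriv pedrosaArea H₀ = 0)
    (huniq : ∀ H ∈ Set.Ioi (0 : ℝ), deriv pedrosaArea H = 0 → H = H₀) :
    (∀ H : ℝ, 0 < H → H < H₀ → 0 < deriv pedrosaArea H) ∧
      (∀ H : ℝ, H₀ < H → deriv pedrosaArea H < 0) :=
  pedrosaArea_deriv_sign_general H₀ hH₀ huniq
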